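/- In a separative valuation algebra over a distributive lattice, composition is exchangeable: if x ≥ y∧z for abstract densities φ,ψ,τ with d(φ)=x, d(ψ)=y, d(τ)=z and the domination conditions δ(π_{x∧y}(ψ)) ≤ δ(π_{x∧y}(φ)), δ(π_{x∧z}(τ)) ≤ δ(π_{x∧z}(φ)) hold, then (φ ▷ ψ) ▷ τ = (φ ▷ τ) ▷ ψ. -/

import Mathlib

/-- A commutative semigroup which is a (disjoint) union of groups:
`e a` is the unit of the group containing `a`, `inv a` its inverse there. -/
structure UnionOfGroups (G : Type*) [CommSemigroup G] where
  e : G → G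
  inv : G → G
  e_idem : ∀ a, e a * e a = e a
  mul_unit : ∀ a, a * e a = a
  mul_inv : ∀ a, a * inv a = e a

/-- A separative valuation algebra `Psi` together with its embedding extension
semigroup `P = Ψ⁰`, a union of disjoint groups.  `e a` is the unit of the group
`δ(a)` containing `a`, `inv a` the group inverse, `d` the labeling, `p` the
projection (total on `Psi` for `x ≤ d a`).  Axioms A1-A5 (with the strong
combination axiom A5') and the separativity conditions S1, S2 are recorded. -/
structure SVA (P : Type*) (D : Type*) [CommSemigroup P] [Lattice D] where
  e : P → P
  inv : P → P
  e_idem : ∀ a, e a * e a = e a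
  mul_unit : ∀ a, a * e a = a
  mul_inv : ∀ a, a * inv a = e a
  e_mul : ∀ a b, e (a * b) = e a * e b
  e_inv : ∀ a, e (inv a) = e a
  d : P → D
  d_mul : ∀ a b, d (a * b) = d a ⊔ d b
  d_inv : ∀ a, d (inv a) = d a
  Psi : Set P
  Psi_mul : ∀ {a b}, a ∈ Psi → b ∈ Psi → a * b ∈ Psi
  p : P → D → P
  p_mem : ∀ {a} (x : D), a ∈ Psi → x ≤ d a → p a x ∈ Psi
  d_p : ∀ {a} (x : D), a ∈ Psi → x ≤ d a → d (p a x) = x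
  p_self : ∀ {a}, a ∈ Psi → p a (d a) = a
  p_trans : ∀ {a} (x y : D), a ∈ Psi → x ≤ y → y ≤ d a → p (p a y) x = p a x
  strong_comb : ∀ {a b} (z : D), a ∈ Psi → b ∈ Psi → d a ≤ z → z ≤ d a ⊔ d b →
    p (a * b) z = a * p b (z ⊓ d b)
  sep : ∀ {a} (x : D), a ∈ Psi → x ≤ d a → e (a * p a x) = e a

namespace SVA

variable {P : Type*} {D : Type*} [CommSemigroup P] [Lattice D]

/-- The domination order between the groups: `δ(a) ≤ δ(b)` iff `f_a · f_b = f_b`. -/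
def domLe (V : SVA P D) (a b : P) : Prop := V.e a * V.e b = V.e b

/-- `π_x(η)` exists for `η ∈ Ψ⁰`: `η = φ·ψ⁻¹` with `φ, ψ ∈ Ψ`,
`d(ψ) ≤ x ≤ d(φ)` and `δ(ψ) ≤ δ(φ)`. -/
def extProjDef (V : SVA P D) (η : P) (x : D) : Prop :=
  ∃ φ ψ, φ ∈ V.Psi ∧ ψ ∈ V.Psi ∧ η = φ * V.inv ψ ∧
    V.d ψ ≤ x ∧ x ≤ V.d φ ∧ V.domLe ψ φ

/-- The partially defined extension of projection to `Ψ⁰`: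
`π_x(φ·ψ⁻¹) = π_x(φ)·ψ⁻¹`. -/
noncomputable def extProj (V : SVA P D) (η : P) (x : D) : P :=
  letI := Classical.propDecidable (V.extProjDef η x)
  if h : V.extProjDef η x then V.p h.choose x * V.inv h.choose_spec.choose else η

/-- The conditional `φ_{x|y} = π_x(φ)·(π_y(φ))⁻¹`. -/
def condit (V : SVA P D) (φ : P) (x y : D) : P := V.p φ x * V.inv (V.p φ y)

/-- The compositional operator `φ ▷ ψ = φ·ψ·(π_{x∧y}(ψ))⁻¹`. -/
noncomputable def comp (V : SVA P D) (φ ψ : P) : P :=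
  φ * ψ * V.inv (V.extProj ψ (V.d φ ⊓ V.d ψ))

/-- An abstract density: all projections `π_z(η)`, `z ≤ d(η)`, exist. -/
def AbsDensity (V : SVA P D) (η : P) : Prop := ∀ z, z ≤ V.d η → V.extProjDef η z

end SVA

variable {P : Type*} {D : Type*} [CommSemigroup P] [DistribLattice D]

/-!
Both sides multiply out to `φ·ψ·τ·(π_{x∧y}(ψ))⁻¹·(π_{x∧z}(τ))⁻¹`: since `d(φ ▷ ψ) = x ∨ y` and
`(x ∨ y) ∧ z = x ∧ z` by distributivity and `y ∧ z ≤ x`, the outer composition divides by the same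
projection of `τ` as `φ ▷ τ` does, and symmetrically for `ψ`.
-/

theorem sup_inf_eq_inf_of_inf_le {α : Type*} [DistribLattice α] {a b c : α} (h : b ⊓ c ≤ a) :
    (a ⊔ b) ⊓ c = a ⊓ c := by
  rw [inf_sup_right, sup_eq_left]
  exact le_inf h inf_le_right

namespace SVA

section Lattice

variable {L : Type*} [Lattice L] (V : SVA P L)

theorem d_extProj {η : P} {x : L} (h : V.extProjDef η x) : V.d (V.extProj η x) = x := by
  obtain ⟨hφ, -, -, hψx, hxφ, -⟩ := h.choose_spec.choose_spec
  rw [extProj, dif_pos h, V.d_mul, V.d_inv, V.d_p x hφ hxφ, sup_eq_left]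
  exact hψx

theorem d_comp {φ ψ : P} (h : V.extProjDef ψ (V.d φ ⊓ V.d ψ)) :
    V.d (V.comp φ ψ) = V.d φ ⊔ V.d ψ := by
  rw [comp, V.d_mul, V.d_mul, V.d_inv, V.d_extProj h, sup_eq_left]
  exact inf_le_left.trans le_sup_left

end Lattice

theorem comp_comp_eq (V : SVA P D) {φ ψ τ : P} (hψ : V.extProjDef ψ (V.d φ ⊓ V.d ψ))
    (hle : V.d ψ ⊓ V.d τ ≤ V.d φ) :
    V.comp (V.comp φ ψ) τ =
      φ * ψ * τ * V.inv (V.extProj ψ (V.d φ ⊓ V.d ψ)) * V.inv (V.extProj τ (V.d φ ⊓ V.d τ)) := by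
  rw [comp, V.d_comp hψ, sup_inf_eq_inf_of_inf_le hle, comp, mul_right_comm (φ * ψ)]

end SVA

theorem SVA.comp_exchange_general (V : SVA P D) {φ ψ τ : P}
    (hψ : V.AbsDensity ψ) (hτ : V.AbsDensity τ)
    (hle : V.d ψ ⊓ V.d τ ≤ V.d φ) :
    V.comp (V.comp φ ψ) τ = V.comp (V.comp φ τ) ψ := by
  rw [V.comp_comp_eq (hψ _ inf_le_right) hle,
    V.comp_comp_eq (hτ _ inf_le_right) (inf_comm (V.d τ) (V.d ψ) ▸ hle), mul_right_comm _ ψ τ,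
    mul_right_comm _ (V.inv _) (V.inv _)]

/-- Over a distributive lattice, composition is exchangeable: if `x ≥ y∧z` for
abstract densities `φ, ψ, τ` with `d(φ) = x`, `d(ψ) = y`, `d(τ) = z` and the
domination conditions hold, then `(φ ▷ ψ) ▷ τ = (φ ▷ τ) ▷ ψ`. -/
theorem SVA.comp_exchange (V : SVA P D) {φ ψ τ : P}
    (hφ : V.AbsDensity φ) (hψ : V.AbsDensity ψ) (hτ : V.AbsDensity τ)
    (hle : V.d ψ ⊓ V.d τ ≤ V.d φ)
    (hdomψ : V.domLe (V.extProj ψ (V.d φ ⊓ V.d ψ)) (V.extProj φ (V.d φ ⊓ V.d ψ)))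
    (hdomτ : V.domLe (V.extProj τ (V.d φ ⊓ V.d τ)) (V.extProj φ (V.d φ ⊓ V.d τ))) :
    V.comp (V.comp φ ψ) τ = V.comp (V.comp φ τ) ψ :=
  SVA.comp_exchange_general V hψ hτ hle
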